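/- Let A = [[1/2, 1/2],[0,0]] and B = [[1/√2, 1/√2],[0,0]], which are commuting 2×2 contractions, and let U be the 4×4 unitary 1-dilation of A given in block form by [[A, D_{A*}],[D_A, −A]] with D_A = (I−A*A)^{1/2}, D_{A*} = (I−AA*)^{1/2}. Then there is no 4×4 matrix of operator norm at most 1 whose top-left 2×2 block equals B and which commutes with U. -/

import Mathlib

open scoped Matrix ComplexOrder
noncomputable section

set_option maxHeartbeats 1000000

/-- Failure of commutant lifting for unitary `1`-dilations: with `A = [[1/2,1/2],[0,0]]`,
`B = [[1/√2,1/√2],[0,0]]` (two commuting contractions) and `U = [[A, D_{A*}],[D_A, -A]]` the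
unitary `1`-dilation of `A`, there is no contractive `4 × 4` matrix with top-left block `B`
commuting with `U`. -/
theorem no_commutant_lifting
    (A B : Matrix (Fin 2) (Fin 2) ℂ)
    (hA : A = !![1/2, 1/2; 0, 0])
    (hB : B = !![(Real.sqrt 2 : ℂ)⁻¹, (Real.sqrt 2 : ℂ)⁻¹; 0, 0])
    (DA DAs : Matrix (Fin 2) (Fin 2) ℂ)
    (hDA : DA.PosSemidef ∧ DA * DA = 1 - Aᴴ * A)
    (hDAs : DAs.PosSemidef ∧ DAs * DAs = 1 - A * Aᴴ)
    (U : Matrix (Fin 2 ⊕ Fin 2) (Fin 2 ⊕ Fin 2) ℂ)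
    (hU : U = Matrix.fromBlocks A DAs DA (-A)) :
    ¬ ∃ C : Matrix (Fin 2 ⊕ Fin 2) (Fin 2 ⊕ Fin 2) ℂ,
        ‖Matrix.toEuclideanCLM (𝕜 := ℂ) C‖ ≤ 1 ∧
        C.toBlocks₁₁ = B ∧ Commute C U := by
  rintro ⟨C, hnorm, hblk, hcomm⟩
  set s : ℂ := (Real.sqrt 2 : ℂ)⁻¹ with hs_def
  have hs : s * s = 1/2 := by
    rw [hs_def, ← mul_inv, ← Complex.ofReal_mul, Real.mul_self_sqrt (by norm_num)]
    norm_num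
  have hstars : star s = s := by
    rw [hs_def, ← Complex.ofReal_inv]; exact Complex.conj_ofReal _
  set r : ℂ := (Real.sqrt (Real.sqrt 2) : ℂ)⁻¹ with hr_def
  have hr : r * r = s := by
    rw [hr_def, hs_def, ← mul_inv, ← Complex.ofReal_mul,
      Real.mul_self_sqrt (Real.sqrt_nonneg 2)]
  have hstarr : star r = r := by
    rw [hr_def, ← Complex.ofReal_inv]; exact Complex.conj_ofReal _
  have hstars' : (starRingEnd ℂ) s = s := hstars
  have hstarr' : (starRingEnd ℂ) r = r := hstarr
  -- explicit square roots
  have hDAs'psd : (!![s, 0; 0, 1] : Matrix (Fin 2) (Fin 2) ℂ).PosSemidef := by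
    have h : (!![r, 0; 0, 1] : Matrix (Fin 2) (Fin 2) ℂ)ᴴ * !![r, 0; 0, 1]
        = !![s, 0; 0, 1] := by
      ext i j
      fin_cases i <;> fin_cases j <;>
        simp [Matrix.mul_apply, Fin.sum_univ_two, Matrix.conjTranspose_apply,
          hstarr, hstarr', hr]
    exact h ▸ Matrix.posSemidef_conjTranspose_mul_self _
  have hDA'psd : (!![(s+1)/2, (s-1)/2; (s-1)/2, (s+1)/2] :
      Matrix (Fin 2) (Fin 2) ℂ).PosSemidef := by
    have h : (!![r*s, r*s; s, -s] : Matrix (Fin 2) (Fin 2) ℂ)ᴴ * !![r*s, r*s; s, -s]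
        = !![(s+1)/2, (s-1)/2; (s-1)/2, (s+1)/2] := by
      ext i j
      fin_cases i <;> fin_cases j <;>
        simp [Matrix.mul_apply, Fin.sum_univ_two, Matrix.conjTranspose_apply,
          map_mul, star_mul', star_neg, hstarr, hstars, hstarr', hstars'] <;>
      first
        | linear_combination (s*s)*hr + (s+1)*hs
        | linear_combination (s*s)*hr + (s-1)*hs
        | linear_combination (-(s*s))*hr + (-(s+1))*hs
        | linear_combination (-(s*s))*hr + (-(s-1))*hs
        | linear_combination (-(s*s))*hr + (s-1)*hs
        | linear_combination (s*s)*hr + (1-s)*hs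
    exact h ▸ Matrix.posSemidef_conjTranspose_mul_self _
  subst hA hB hU
  have hAH : (!![1/2, 1/2; 0, 0] : Matrix (Fin 2) (Fin 2) ℂ)ᴴ = !![1/2, 0; 1/2, 0] := by
    ext i j
    fin_cases i <;> fin_cases j <;> simp
  have hR2 : (1 : Matrix (Fin 2) (Fin 2) ℂ)
      - !![1/2, 1/2; 0, 0] * (!![1/2, 1/2; 0, 0] : Matrix (Fin 2) (Fin 2) ℂ)ᴴ
      = !![1/2, 0; 0, 1] := by
    rw [hAH]
    ext i j
    fin_cases i <;> fin_cases j <;>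
      simp [Matrix.mul_apply, Fin.sum_univ_two, Matrix.one_apply] <;> norm_num
  have hR1 : (1 : Matrix (Fin 2) (Fin 2) ℂ)
      - (!![1/2, 1/2; 0, 0] : Matrix (Fin 2) (Fin 2) ℂ)ᴴ * !![1/2, 1/2; 0, 0]
      = !![3/4, -(1/4); -(1/4), 3/4] := by
    rw [hAH]
    ext i j
    fin_cases i <;> fin_cases j <;>
      simp [Matrix.mul_apply, Fin.sum_univ_two, Matrix.one_apply] <;> norm_num
  have hDAseq : DAs = !![s, 0; 0, 1] := by
    open scoped MatrixOrder in
    refine (CFC.sq_eq_sq_iff DAs _ hDAs.1.nonneg hDAs'psd.nonneg).mp ?_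
    rw [sq, sq, hDAs.2, hR2]
    ext i j
    fin_cases i <;> fin_cases j <;>
      simp [Matrix.mul_apply, Fin.sum_univ_two] <;>
    first
      | linear_combination hs
      | linear_combination -hs
  have hDAeq : DA = !![(s+1)/2, (s-1)/2; (s-1)/2, (s+1)/2] := by
    open scoped MatrixOrder in
    refine (CFC.sq_eq_sq_iff DA _ hDA.1.nonneg hDA'psd.nonneg).mp ?_
    rw [sq, sq, hDA.2, hR1]
    ext i j
    fin_cases i <;> fin_cases j <;>
      simp [Matrix.mul_apply, Fin.sum_univ_two] <;>
    first
      | linear_combination (1/2 : ℂ) * hs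
      | linear_combination (-(1/2) : ℂ) * hs
      | linear_combination hs
      | linear_combination -hs
  -- the known top-left block entries of C
  have hb : ∀ i j, C (Sum.inl i) (Sum.inl j)
      = !![s, s; 0, 0] i j := fun i j => by rw [← hblk]; rfl
  have hc00 : C (Sum.inl 0) (Sum.inl 0) = s := by rw [hb]; simp
  have hc01 : C (Sum.inl 0) (Sum.inl 1) = s := by rw [hb]; simp
  have hc10 : C (Sum.inl 1) (Sum.inl 0) = 0 := by rw [hb]; simp
  have hc11 : C (Sum.inl 1) (Sum.inl 1) = 0 := by rw [hb]; simp
  -- entrywise commutation equations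
  have hCU : ∀ i j, (∑ k, C i k * Matrix.fromBlocks !![1/2, 1/2; 0, 0] DAs DA
        (-!![1/2, 1/2; 0, 0]) k j)
      = ∑ k, Matrix.fromBlocks !![1/2, 1/2; 0, 0] DAs DA (-!![1/2, 1/2; 0, 0]) i k * C k j :=
    fun i j => by rw [← Matrix.mul_apply, ← Matrix.mul_apply, hcomm.eq]
  have e00 := hCU (Sum.inl 0) (Sum.inl 0)
  have e01 := hCU (Sum.inl 0) (Sum.inl 1)
  have e02 := hCU (Sum.inl 0) (Sum.inr 0)
  have e10 := hCU (Sum.inl 1) (Sum.inl 0)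
  have e11 := hCU (Sum.inl 1) (Sum.inl 1)
  have e12 := hCU (Sum.inl 1) (Sum.inr 0)
  have e20 := hCU (Sum.inr 0) (Sum.inl 0)
  have e21 := hCU (Sum.inr 0) (Sum.inl 1)
  have e22 := hCU (Sum.inr 0) (Sum.inr 0)
  simp only [Fintype.sum_sum_type, Fin.sum_univ_two, hDAeq, hDAseq,
    Matrix.fromBlocks_apply₁₁, Matrix.fromBlocks_apply₁₂, Matrix.fromBlocks_apply₂₁,
    Matrix.fromBlocks_apply₂₂, Matrix.neg_apply, Matrix.cons_val', Matrix.cons_val_zero,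
    Matrix.cons_val_one, Matrix.head_cons, Matrix.empty_val', Matrix.cons_val_fin_one,
    Matrix.head_fin_const, Matrix.of_apply, hc00, hc01, hc10, hc11]
    at e00 e01 e02 e10 e11 e12 e20 e21 e22
  -- the key linear identity forced by commutation
  have key : C (Sum.inr 0) (Sum.inl 0) + C (Sum.inr 0) (Sum.inl 1) = 1 := by
    linear_combination (-1 - 2*s) * e00 + (1 - 2*s) * e01 + (4 + 8*s) * e02
      + (2 + 3*s) * e10 + s * e11 + (-4 - 4*s) * e12 + (4 + 6*s) * e20 + (2*s) * e21
      + (-8 - 8*s) * e22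
      + (6 * C (Sum.inr 0) (Sum.inl 0) - 2 * C (Sum.inr 0) (Sum.inl 1) + 2 - 4*s
          - 2 * C (Sum.inl 0) (Sum.inr 0) + 2 * C (Sum.inl 0) (Sum.inr 1)
          - 6 * C (Sum.inl 1) (Sum.inr 0) - 2 * C (Sum.inl 1) (Sum.inr 1)
          + 4 * C (Sum.inr 0) (Sum.inr 0) - 4 * C (Sum.inr 0) (Sum.inr 1)) * hs
  -- now derive the norm contradiction
  set v : (Fin 2 ⊕ Fin 2) → ℂ := Sum.elim ![s, s] 0 with hv_def
  set x : EuclideanSpace ℂ (Fin 2 ⊕ Fin 2) := (WithLp.equiv 2 _).symm v with hx_def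
  have hns : ‖s‖ ^ 2 = 1/2 := by
    rw [hs_def, ← Complex.ofReal_inv, Complex.norm_real]
    rw [Real.norm_eq_abs, sq_abs, ← Real.sqrt_inv]
    rw [Real.sq_sqrt (by norm_num)]
    norm_num
  have hxnorm : ‖x‖ = 1 := by
    rw [hx_def, EuclideanSpace.norm_eq]
    simp only [WithLp.equiv_symm_apply, WithLp.ofLp_toLp]
    rw [Fintype.sum_sum_type, Fin.sum_univ_two, Fin.sum_univ_two]
    simp only [hv_def, Sum.elim_inl, Sum.elim_inr, Matrix.cons_val_zero, Matrix.cons_val_one,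
      Matrix.head_cons, Pi.zero_apply, norm_zero]
    rw [hns]
    norm_num
  have hy : Matrix.toEuclideanCLM (𝕜 := ℂ) C x = (WithLp.equiv 2 _).symm (C.mulVec v) := by
    rw [hx_def, WithLp.equiv_symm_apply, Matrix.toEuclideanCLM_toLp]
  have hyle : ‖Matrix.toEuclideanCLM (𝕜 := ℂ) C x‖ ≤ 1 := by
    calc ‖Matrix.toEuclideanCLM (𝕜 := ℂ) C x‖
        ≤ ‖Matrix.toEuclideanCLM (𝕜 := ℂ) C‖ * ‖x‖ := ContinuousLinearMap.le_opNorm _ _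
      _ ≤ 1 * 1 := by
          apply mul_le_mul hnorm (le_of_eq hxnorm) (norm_nonneg _) (by norm_num)
      _ = 1 := by norm_num
  -- compute two components of the image
  have hm0 : C.mulVec v (Sum.inl 0) = 1 := by
    rw [Matrix.mulVec, dotProduct, Fintype.sum_sum_type, Fin.sum_univ_two,
      Fin.sum_univ_two]
    simp only [hv_def, Sum.elim_inl, Sum.elim_inr, Matrix.cons_val_zero, Matrix.cons_val_one,
      Matrix.head_cons, Pi.zero_apply, mul_zero, add_zero, hc00, hc01]
    linear_combination 2 * hs
  have hm2 : C.mulVec v (Sum.inr 0) = s := by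
    rw [Matrix.mulVec, dotProduct, Fintype.sum_sum_type, Fin.sum_univ_two,
      Fin.sum_univ_two]
    simp only [hv_def, Sum.elim_inl, Sum.elim_inr, Matrix.cons_val_zero, Matrix.cons_val_one,
      Matrix.head_cons, Pi.zero_apply, mul_zero, add_zero]
    linear_combination s * key
  -- lower bound on the norm of the image
  have hsq : (3/2 : ℝ) ≤ ‖Matrix.toEuclideanCLM (𝕜 := ℂ) C x‖ ^ 2 := by
    rw [hy, EuclideanSpace.norm_eq]
    simp only [WithLp.equiv_symm_apply, WithLp.ofLp_toLp]
    rw [Fintype.sum_sum_type, Fin.sum_univ_two, Fin.sum_univ_two, hm0, hm2, hns]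
    have h1 : ‖(1 : ℂ)‖ ^ 2 = 1 := by norm_num
    rw [h1]
    rw [Real.sq_sqrt (by positivity)]
    nlinarith [sq_nonneg ‖C.mulVec v (Sum.inl 1)‖, sq_nonneg ‖C.mulVec v (Sum.inr 1)‖]
  have hsq' : ‖Matrix.toEuclideanCLM (𝕜 := ℂ) C x‖ ^ 2 ≤ 1 := by
    nlinarith [norm_nonneg (Matrix.toEuclideanCLM (𝕜 := ℂ) C x)]
  linarith
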